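/- arXiv:2406.07024 — 10 statements merged into one kernel-verified Lean document; each statement's English description precedes it below -/
import Mathlib

section
/- Let M be a finite set of m items with nonnegative values v : M → ℝ (extended additively to subsets by v(S) = ∑_{j∈S} v(j)), let μ be the two-agent maximin share of v, and let k be an integer with 1 ≤ k ≤ m − 1. If S ⊆ M has exactly k elements and S contains an item whose value is at least the second-largest item value v^(2), then v(S) ≥ μ / (m − k). -/
/-- The two-agent maximin share of a valuation `v` on a finite set `M` of items:
the maximum over all partitions of `M` into two bundles of the smaller bundle's value. -/
noncomputable def mms2 {ι : Type*} [DecidableEq ι] (M : Finset ι) (v : ι → ℝ) : ℝ :=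
  M.powerset.sup' ⟨∅, Finset.empty_mem_powerset M⟩
    (fun S => min (∑ j ∈ S, v j) (∑ j ∈ M \ S, v j))

/-- If a bundle `S` of `k` items contains an item whose value is at least the
second-largest item value, then `v(S) ≥ μ / (m - k)` where `μ` is the two-agent
maximin share. -/
theorem bundle_with_second_best_approximates_mms
    {ι : Type*} [Fintype ι] [DecidableEq ι]
    (m : ℕ) (hm : 2 ≤ m) (hcard : Fintype.card ι = m)
    (v : ι → ℝ) (hv : ∀ j, 0 ≤ v j)
    (e : Fin m → ι) (he : Function.Bijective e)
    (hsort : ∀ k l : Fin m, k ≤ l → v (e l) ≤ v (e k))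
    (μ : ℝ) (hμ : μ = mms2 Finset.univ v)
    (k : ℕ) (hk1 : 1 ≤ k) (hk2 : k ≤ m - 1)
    (S : Finset ι) (hScard : S.card = k)
    (hfav : ∃ j ∈ S, v (e ⟨1, by omega⟩) ≤ v j) :
    μ / ((m : ℝ) - k) ≤ ∑ j ∈ S, v j := by
  have hkm : k + 1 ≤ m := by omega
  obtain ⟨js, hjsS, hjs⟩ := hfav
  set vS : ℝ := ∑ j ∈ S, v j with hvSdef
  have hvS0 : 0 ≤ vS := Finset.sum_nonneg fun j _ => hv j
  have hjs_le : v js ≤ vS := Finset.single_le_sum (fun j _ => hv j) hjsS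
  have he1_le : v (e ⟨1, by omega⟩) ≤ vS := le_trans hjs hjs_le
  set e0 : ι := e ⟨0, by omega⟩ with he0def
  -- every item other than e0 has value at most v(e1) ≤ vS
  have hsmall : ∀ j : ι, j ≠ e0 → v j ≤ vS := by
    intro j hj
    obtain ⟨l, rfl⟩ := he.2 j
    have hl0 : l ≠ ⟨0, by omega⟩ := fun h => hj (by rw [h])
    have hl : (⟨1, by omega⟩ : Fin m) ≤ l := by
      rw [Fin.le_def]
      change 1 ≤ l.val
      have : l.val ≠ 0 := fun h => hl0 (Fin.ext h)
      omega
    exact le_trans (hsort ⟨1, by omega⟩ l hl) he1_le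
  have hcarduniv : (Finset.univ : Finset ι).card = m := by
    simp [hcard]
  have hcardcompl : (Finset.univ \ S).card = m - k := by
    rw [Finset.card_sdiff_of_subset (Finset.subset_univ S), hcarduniv, hScard]
  have hc1 : (1 : ℝ) ≤ (m : ℝ) - k := by
    have : (k : ℝ) + 1 ≤ (m : ℝ) := by exact_mod_cast hkm
    linarith
  have hcpos : (0 : ℝ) < (m : ℝ) - k := by linarith
  rw [div_le_iff₀ hcpos, hμ, mms2]
  apply Finset.sup'_le
  intro T _
  -- suffices: each partition's min part is at most ((m:ℝ)-k) * vS
  show min (∑ j ∈ T, v j) (∑ j ∈ Finset.univ \ T, v j) ≤ vS * ((m : ℝ) - k)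
  by_cases he0S : e0 ∈ S
  · -- all items are ≤ vS; min ≤ total/2 ≤ (m-k+1)/2 * vS ≤ (m-k) * vS
    have hall : ∀ j : ι, v j ≤ vS := by
      intro j
      by_cases hj : j = e0
      · subst hj; exact Finset.single_le_sum (fun j _ => hv j) he0S
      · exact hsmall j hj
    have hcompl : ∑ j ∈ Finset.univ \ S, v j ≤ ((m - k : ℕ) : ℝ) * vS := by
      have := Finset.sum_le_card_nsmul (Finset.univ \ S) v vS
        (fun j _ => hall j)
      rwa [hcardcompl, nsmul_eq_mul] at this
    have htot : ∑ j ∈ (Finset.univ : Finset ι), v j ≤ (((m : ℝ) - k) + 1) * vS := by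
      have hsplit : ∑ j ∈ Finset.univ \ S, v j + ∑ j ∈ S, v j
          = ∑ j ∈ (Finset.univ : Finset ι), v j :=
        Finset.sum_sdiff (Finset.subset_univ S)
      have hcast : ((m - k : ℕ) : ℝ) = (m : ℝ) - k := by
        push_cast [Nat.cast_sub (le_of_lt (by omega : k < m))]; ring
      rw [← hsplit]
      rw [hcast] at hcompl
      linarith
    have hsum : ∑ j ∈ T, v j + ∑ j ∈ Finset.univ \ T, v j
        = ∑ j ∈ (Finset.univ : Finset ι), v j := by
      rw [add_comm]; exact Finset.sum_sdiff (Finset.subset_univ T)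
    have hminhalf : min (∑ j ∈ T, v j) (∑ j ∈ Finset.univ \ T, v j)
        ≤ (∑ j ∈ (Finset.univ : Finset ι), v j) / 2 := by
      rcases le_total (∑ j ∈ T, v j) (∑ j ∈ Finset.univ \ T, v j) with h | h
      · rw [min_eq_left h]; linarith
      · rw [min_eq_right h]; linarith
    have : (((m : ℝ) - k) + 1) / 2 * vS ≤ vS * ((m : ℝ) - k) := by nlinarith
    calc min (∑ j ∈ T, v j) (∑ j ∈ Finset.univ \ T, v j)
        ≤ (∑ j ∈ (Finset.univ : Finset ι), v j) / 2 := hminhalf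
      _ ≤ (((m : ℝ) - k) + 1) / 2 * vS := by linarith
      _ ≤ vS * ((m : ℝ) - k) := this
  · -- e0 ∉ S: the part not containing e0 has value ≤ (m-k) * vS
    have key : ∀ B : Finset ι, e0 ∉ B → ∑ j ∈ B, v j ≤ vS * ((m : ℝ) - k) := by
      intro B he0B
      have hsplit : ∑ j ∈ B ∩ S, v j + ∑ j ∈ B \ S, v j = ∑ j ∈ B, v j :=
        Finset.sum_inter_add_sum_sdiff B S v
      have h1 : ∑ j ∈ B ∩ S, v j ≤ vS :=
        Finset.sum_le_sum_of_subset_of_nonneg Finset.inter_subset_right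
          (fun j _ _ => hv j)
      have hBsub : B \ S ⊆ (Finset.univ \ S).erase e0 := by
        intro j hj
        rw [Finset.mem_erase]
        rw [Finset.mem_sdiff] at hj
        refine ⟨fun h => he0B (h ▸ hj.1), ?_⟩
        simp [hj.2]
      have hcardB : (B \ S).card ≤ m - k - 1 := by
        have := Finset.card_le_card hBsub
        have he0c : e0 ∈ Finset.univ \ S := by simp [he0S]
        rw [Finset.card_erase_of_mem he0c, hcardcompl] at this
        exact this
      have h2 : ∑ j ∈ B \ S, v j ≤ ((m : ℝ) - k - 1) * vS := by
        have hle := Finset.sum_le_card_nsmul (B \ S) v vS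
          (fun j hj => hsmall j (by
            rw [Finset.mem_sdiff] at hj
            exact fun h => he0B (h ▸ hj.1)))
        rw [nsmul_eq_mul] at hle
        have hcast : ((B \ S).card : ℝ) ≤ (m : ℝ) - k - 1 := by
          have : ((B \ S).card : ℝ) ≤ ((m - k - 1 : ℕ) : ℝ) := by exact_mod_cast hcardB
          have h2' : ((m - k - 1 : ℕ) : ℝ) = (m : ℝ) - k - 1 := by
            have h3 : m - k - 1 + (k + 1) = m := by omega
            have := congrArg (fun n : ℕ => (n : ℝ)) h3
            push_cast at this
            linarith
          linarith
        calc ∑ j ∈ B \ S, v j ≤ ((B \ S).card : ℝ) * vS := hle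
          _ ≤ ((m : ℝ) - k - 1) * vS := by
              exact mul_le_mul_of_nonneg_right hcast hvS0
      nlinarith
    by_cases he0T : e0 ∈ T
    · have : e0 ∉ Finset.univ \ T := by simp [he0T]
      exact le_trans (min_le_right _ _) (key _ this)
    · exact le_trans (min_le_left _ _) (key _ he0T)
end

section
/- Let M be a finite set of m items with nonnegative values v₁ : M → ℝ, let μ₁ be the two-agent maximin share of v₁, and let k ≥ 1. Suppose M = A₁ ⊔ A₂ with |A₁| ≥ k and |A₂| ≥ k. Choose any ĵ₁ ∈ A₁ and ĵ₂ ∈ A₂, set T₁ = (A₁ \ {ĵ₁}) ∪ {ĵ₂} and T₂ = (A₂ \ {ĵ₂}) ∪ {ĵ₁}; let j̃₁ ∈ T₂ be an item maximizing v₁ over T₂ and let j̃₂ ∈ T₁ be arbitrary. Then the final bundle X₁ = (T₁ ∪ {j̃₁}) \ {j̃₂} satisfies v₁(X₁) ≥ μ₁ / (m − k). -/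
/-- Robustness lemma for the Plant-and-Steal framework: if the initial allocation
`(A₁, A₂)` satisfies `min(|A₁|, |A₂|) ≥ k`, then after planting items `jhat₁, jhat₂` and
stealing items `jtil₁, jtil₂` (where agent 1 steals a `v₁`-maximal item of `T₂`), agent 1's
final bundle `X₁ = (T₁ ∪ {jtil₁}) \ {jtil₂}` satisfies `v₁(X₁) ≥ μ₁ / (m - k)`. -/
theorem plant_and_steal_robust
    {ι : Type*} [Fintype ι] [DecidableEq ι]
    (m : ℕ) (hcard : Fintype.card ι = m)
    (v₁ : ι → ℝ) (hv : ∀ j, 0 ≤ v₁ j)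
    (μ₁ : ℝ) (hμ : μ₁ = mms2 Finset.univ v₁)
    (k : ℕ) (hk : 1 ≤ k)
    (A₁ A₂ : Finset ι) (hdisj : Disjoint A₁ A₂) (hunion : A₁ ∪ A₂ = Finset.univ)
    (hA₁ : k ≤ A₁.card) (hA₂ : k ≤ A₂.card)
    (jhat₁ : ι) (hjhat₁ : jhat₁ ∈ A₁) (jhat₂ : ι) (hjhat₂ : jhat₂ ∈ A₂)
    (T₁ T₂ : Finset ι)
    (hT₁ : T₁ = (A₁ \ {jhat₁}) ∪ {jhat₂}) (hT₂ : T₂ = (A₂ \ {jhat₂}) ∪ {jhat₁})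
    (jtil₁ : ι) (hjtil₁ : jtil₁ ∈ T₂) (hjtil₁max : ∀ j ∈ T₂, v₁ j ≤ v₁ jtil₁)
    (jtil₂ : ι) (hjtil₂ : jtil₂ ∈ T₁) :
    μ₁ / ((m : ℝ) - k) ≤ ∑ j ∈ (T₁ ∪ {jtil₁}) \ {jtil₂}, v₁ j := by
  -- basic structural facts
  have hdisjT : Disjoint T₁ T₂ := by
    subst hT₁ hT₂
    rw [Finset.disjoint_left]
    intro a ha hb
    simp only [Finset.mem_union, Finset.mem_sdiff, Finset.mem_singleton] at ha hb
    rcases ha with ⟨h1, h2⟩ | rfl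
    · rcases hb with ⟨h3, _⟩ | rfl
      · exact Finset.disjoint_left.mp hdisj h1 h3
      · exact h2 rfl
    · rcases hb with ⟨h3, h4⟩ | heq
      · exact h4 rfl
      · exact Finset.disjoint_left.mp hdisj hjhat₁ (heq ▸ hjhat₂)
  have hunionT : T₁ ∪ T₂ = Finset.univ := by
    subst hT₁ hT₂
    apply Finset.eq_univ_of_forall
    intro a
    have : a ∈ A₁ ∪ A₂ := hunion ▸ Finset.mem_univ a
    simp only [Finset.mem_union, Finset.mem_sdiff, Finset.mem_singleton] at this ⊢
    by_cases h1 : a = jhat₁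
    · tauto
    · by_cases h2 : a = jhat₂ <;> tauto
  have hcardT₂ : T₂.card = A₂.card := by
    subst hT₂
    rw [Finset.card_union_of_disjoint, Finset.card_sdiff_of_subset (by simpa using hjhat₂)]
    · simp
      omega
    · simp only [Finset.disjoint_singleton_right, Finset.mem_sdiff, not_and]
      intro h; exact absurd h (Finset.disjoint_left.mp hdisj hjhat₁)
  have hm : m = A₁.card + A₂.card := by
    rw [← hcard, ← Finset.card_univ, ← hunion, Finset.card_union_of_disjoint hdisj]
  have hjtil₁T₁ : jtil₁ ∉ T₁ := Finset.disjoint_right.mp hdisjT hjtil₁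
  have hne : jtil₁ ≠ jtil₂ := fun h => hjtil₁T₁ (h ▸ hjtil₂)
  have hmk1 : (1:ℝ) ≤ (m:ℝ) - k := by
    have : k + 1 ≤ m := by omega
    have := (Nat.cast_le (α := ℝ)).mpr this
    push_cast at this
    linarith
  have hmkpos : (0:ℝ) < (m:ℝ) - k := by linarith
  -- value of the final bundle
  have hX : ∑ j ∈ (T₁ ∪ {jtil₁}) \ {jtil₂}, v₁ j
      = ∑ j ∈ T₁, v₁ j + v₁ jtil₁ - v₁ jtil₂ := by
    rw [Finset.sum_sdiff_eq_sub (by simp [hjtil₂]),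
        Finset.sum_union (by simp [hjtil₁T₁]), Finset.sum_singleton, Finset.sum_singleton]
  have hP : (0:ℝ) ≤ ∑ j ∈ T₁, v₁ j - v₁ jtil₂ := by
    have := Finset.sum_le_sum_of_subset_of_nonneg (Finset.singleton_subset_iff.mpr hjtil₂)
      (fun j _ _ => hv j)
    simp only [Finset.sum_singleton] at this
    linarith
  -- key bound: any set avoiding jtil₂ has value at most (m-k) * v₁(X₁)
  have key : ∀ B : Finset ι, jtil₂ ∉ B →
      ∑ j ∈ B, v₁ j ≤ (∑ j ∈ T₁, v₁ j + v₁ jtil₁ - v₁ jtil₂) * ((m:ℝ) - k) := by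
    intro B hB
    have hsplit : ∑ j ∈ B ∩ T₁, v₁ j + ∑ j ∈ B \ T₁, v₁ j = ∑ j ∈ B, v₁ j :=
      Finset.sum_inter_add_sum_sdiff B T₁ v₁
    have h1 : ∑ j ∈ B ∩ T₁, v₁ j ≤ ∑ j ∈ T₁ \ {jtil₂}, v₁ j := by
      apply Finset.sum_le_sum_of_subset_of_nonneg
      · intro a ha
        simp only [Finset.mem_inter] at ha
        simp only [Finset.mem_sdiff, Finset.mem_singleton]
        exact ⟨ha.2, fun h => hB (h ▸ ha.1)⟩
      · exact fun j _ _ => hv j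
    have h1' : ∑ j ∈ T₁ \ {jtil₂}, v₁ j = ∑ j ∈ T₁, v₁ j - v₁ jtil₂ := by
      rw [Finset.sum_sdiff_eq_sub (Finset.singleton_subset_iff.mpr hjtil₂),
        Finset.sum_singleton]
    have hsub : B \ T₁ ⊆ T₂ := by
      intro a ha
      simp only [Finset.mem_sdiff] at ha
      have : a ∈ T₁ ∪ T₂ := hunionT ▸ Finset.mem_univ a
      rcases Finset.mem_union.mp this with h | h
      · exact absurd h ha.2
      · exact h
    have h2 : ∑ j ∈ B \ T₁, v₁ j ≤ ((B \ T₁).card : ℝ) * v₁ jtil₁ := by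
      have := Finset.sum_le_card_nsmul (B \ T₁) v₁ (v₁ jtil₁)
        (fun j hj => hjtil₁max j (hsub hj))
      simpa [nsmul_eq_mul] using this
    have hc : ((B \ T₁).card : ℝ) ≤ (m:ℝ) - k := by
      have h3 : (B \ T₁).card ≤ T₂.card := Finset.card_le_card hsub
      have h4 : (B \ T₁).card + k ≤ m := by
        rw [hcardT₂] at h3; omega
      have := (Nat.cast_le (α := ℝ)).mpr h4
      push_cast at this
      linarith
    have h2' : ∑ j ∈ B \ T₁, v₁ j ≤ ((m:ℝ) - k) * v₁ jtil₁ := by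
      have hb0 : 0 ≤ v₁ jtil₁ := hv jtil₁
      calc ∑ j ∈ B \ T₁, v₁ j ≤ ((B \ T₁).card : ℝ) * v₁ jtil₁ := h2
        _ ≤ ((m:ℝ) - k) * v₁ jtil₁ := by nlinarith
    nlinarith [hv jtil₁, mul_nonneg (sub_nonneg.mpr hmk1) (hv jtil₁)]
  rw [hμ, hX, div_le_iff₀ hmkpos, mms2]
  apply Finset.sup'_le
  intro S hS
  by_cases hc : jtil₂ ∈ S
  · refine le_trans (min_le_right _ _) (key _ ?_)
    simp [hc]
  · exact le_trans (min_le_left _ _) (key _ hc)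
end

section
/- Let M be a finite set of m items with nonnegative values v : M → ℝ and let μ be the two-agent maximin share of v. Then the sum of the item values in even sorted positions satisfies ∑_{k=1}^{⌊m/2⌋} v^(2k) ≥ μ / 2. -/
/-- The sum of the item values in even sorted positions (1-based positions
`2, 4, …, 2⌊m/2⌋`) is at least half the two-agent maximin share. -/
theorem even_positions_ge_half_mms
    {ι : Type*} [Fintype ι] [DecidableEq ι]
    (m : ℕ) (hcard : Fintype.card ι = m)
    (v : ι → ℝ) (hv : ∀ j, 0 ≤ v j)
    (e : Fin m → ι) (he : Function.Bijective e)
    (hsort : ∀ k l : Fin m, k ≤ l → v (e l) ≤ v (e k))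
    (μ : ℝ) (hμ : μ = mms2 Finset.univ v) :
    μ / 2 ≤ ∑ k ∈ Finset.univ.filter (fun k : Fin m => ((k : ℕ) + 1) % 2 = 0), v (e k) := by
  rcases Nat.eq_zero_or_pos m with hm | hm
  · subst hm
    haveI : IsEmpty ι := Fintype.card_eq_zero_iff.mp hcard
    rw [hμ]
    simp [mms2, Finset.univ_eq_empty]
  set z : Fin m := ⟨0, hm⟩ with hz
  -- the top item
  have hmax : ∀ j : ι, v j ≤ v (e z) := by
    intro j
    obtain ⟨k, rfl⟩ := he.surjective j
    exact hsort z k (Fin.mk_le_mk.mpr (Nat.zero_le _))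
  -- Step A : μ ≤ total - v (e z)
  have hA : μ ≤ (∑ j, v j) - v (e z) := by
    rw [hμ, mms2]
    apply Finset.sup'_le
    intro S hS
    have hsub : ∀ T : Finset ι, T ⊆ Finset.univ \ {e z} →
        (∑ j ∈ T, v j) ≤ (∑ j, v j) - v (e z) := by
      intro T hT
      have h1 : (∑ j ∈ T, v j) ≤ ∑ j ∈ Finset.univ \ {e z}, v j :=
        Finset.sum_le_sum_of_subset_of_nonneg hT (fun i _ _ => hv i)
      have h2 : ∑ j ∈ Finset.univ \ {e z}, v j = (∑ j, v j) - v (e z) := by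
        rw [Finset.sum_sdiff_eq_sub (Finset.singleton_subset_iff.mpr (Finset.mem_univ _))]
        simp
      linarith
    by_cases h : e z ∈ S
    · refine le_trans (min_le_right _ _) (hsub _ ?_)
      intro x hx
      simp only [Finset.mem_sdiff, Finset.mem_singleton, Finset.mem_univ, true_and] at hx ⊢
      rintro rfl; exact hx h
    · refine le_trans (min_le_left _ _) (hsub _ ?_)
      intro x hx
      simp only [Finset.mem_sdiff, Finset.mem_singleton, Finset.mem_univ, true_and]
      rintro rfl; exact h hx
  -- rewrite total as sum over Fin m
  have htot : (∑ k : Fin m, v (e k)) = ∑ j, v j :=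
    Fintype.sum_bijective e he _ _ (fun _ => rfl)
  have hsplit : (∑ k : Fin m, v (e k)) = v (e z) + ∑ k ∈ Finset.univ.erase z, v (e k) :=
    (Finset.add_sum_erase _ _ (Finset.mem_univ z)).symm
  -- Step B : sum over erase z ≤ 2 * odd sum
  set Oset := Finset.univ.filter (fun k : Fin m => ((k : ℕ) + 1) % 2 = 0) with hOset
  have hsplit2 : (∑ k ∈ Finset.univ.erase z, v (e k)) =
      (∑ k ∈ (Finset.univ.erase z).filter (fun k : Fin m => ((k : ℕ) + 1) % 2 = 0), v (e k))
      + ∑ k ∈ (Finset.univ.erase z).filter (fun k : Fin m => ¬ ((k : ℕ) + 1) % 2 = 0), v (e k) :=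
    (Finset.sum_filter_add_sum_filter_not _ _ _).symm
  have hOeq : (Finset.univ.erase z).filter (fun k : Fin m => ((k : ℕ) + 1) % 2 = 0) = Oset := by
    ext k
    simp only [hOset, Finset.mem_filter, Finset.mem_erase, Finset.mem_univ, true_and]
    constructor
    · rintro ⟨⟨-, -⟩, h⟩; exact h
    · intro h
      refine ⟨⟨?_, trivial⟩, h⟩
      intro hk
      rw [hk] at h
      simp [hz] at h
  -- the map k ↦ k-1 from evens (≠ 0) into odds
  set f : Fin m → Fin m := fun k => ⟨k.val - 1, Nat.lt_of_le_of_lt (Nat.sub_le _ _) k.isLt⟩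
    with hf
  set E2 := (Finset.univ.erase z).filter (fun k : Fin m => ¬ ((k : ℕ) + 1) % 2 = 0) with hE2
  have hE2le : (∑ k ∈ E2, v (e k)) ≤ ∑ k ∈ Oset, v (e k) := by
    have step1 : (∑ k ∈ E2, v (e k)) ≤ ∑ k ∈ E2, v (e (f k)) := by
      apply Finset.sum_le_sum
      intro k _
      exact hsort (f k) k (by simp only [hf, Fin.le_def]; omega)
    have hinj : Set.InjOn f E2 := by
      intro a ha b hb hab
      simp only [hE2, Finset.mem_coe, Finset.mem_filter, Finset.mem_erase] at ha hb
      have ha0 : (a : ℕ) ≠ 0 := fun h => ha.1.1 (Fin.ext h)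
      have hb0 : (b : ℕ) ≠ 0 := fun h => hb.1.1 (Fin.ext h)
      have : (a : ℕ) - 1 = (b : ℕ) - 1 := congrArg Fin.val hab
      exact Fin.ext (by omega)
    have step2 : (∑ k ∈ E2.image f, v (e k)) = ∑ k ∈ E2, v (e (f k)) :=
      Finset.sum_image (f := fun k => v (e k)) (fun a ha b hb h => hinj ha hb h)
    have step3 : E2.image f ⊆ Oset := by
      intro x hx
      obtain ⟨k, hk, rfl⟩ := Finset.mem_image.mp hx
      simp only [hE2, Finset.mem_filter, Finset.mem_erase] at hk
      have hk0 : (k : ℕ) ≠ 0 := fun h => hk.1.1 (Fin.ext h)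
      simp only [hOset, Finset.mem_filter, Finset.mem_univ, true_and, hf]
      have := hk.2
      omega
    have step4 : (∑ k ∈ E2.image f, v (e k)) ≤ ∑ k ∈ Oset, v (e k) :=
      Finset.sum_le_sum_of_subset_of_nonneg step3 (fun i _ _ => hv _)
    linarith
  have : (∑ j, v j) - v (e z) ≤ 2 * ∑ k ∈ Oset, v (e k) := by
    rw [← htot, hsplit, hsplit2, hOeq]
    linarith
  linarith
end

section
/- Let M be a finite set of m items with nonnegative values v : M → ℝ and let μ be the two-agent maximin share of v. Then ∑_{k=1}^{⌈m/3⌉} v^(3k−2) ≥ 2μ / 3. -/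
/-- The sum of the item values in sorted positions `1, 4, 7, …` (1-based positions
`3k - 2` for `1 ≤ k ≤ ⌈m/3⌉`) is at least two thirds of the two-agent maximin share. -/
theorem one_two_round_robin_first_agent
    {ι : Type*} [Fintype ι] [DecidableEq ι]
    (m : ℕ) (hcard : Fintype.card ι = m)
    (v : ι → ℝ) (hv : ∀ j, 0 ≤ v j)
    (e : Fin m → ι) (he : Function.Bijective e)
    (hsort : ∀ k l : Fin m, k ≤ l → v (e l) ≤ v (e k))
    (μ : ℝ) (hμ : μ = mms2 Finset.univ v) :
    2 * μ / 3 ≤ ∑ k ∈ Finset.univ.filter (fun k : Fin m => ((k : ℕ) + 1) % 3 = 1), v (e k) := by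
  set T : ℝ := ∑ j, v j with hT
  -- μ ≤ T / 2
  have hμT : μ ≤ T / 2 := by
    rw [hμ, mms2]
    apply Finset.sup'_le
    intro S hS
    have hsplit : (∑ j ∈ S, v j) + (∑ j ∈ Finset.univ \ S, v j) = T := by
      rw [hT, ← Finset.sum_sdiff (Finset.mem_powerset.mp hS)]
      ring
    rcases min_le_iff.mpr (Or.inl (le_refl (∑ j ∈ S, v j))) with _
    have h1 : 0 ≤ ∑ j ∈ S, v j := Finset.sum_nonneg fun j _ => hv j
    have h2 : 0 ≤ ∑ j ∈ Finset.univ \ S, v j := Finset.sum_nonneg fun j _ => hv j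
    rcases le_total (∑ j ∈ S, v j) (∑ j ∈ Finset.univ \ S, v j) with h | h
    · rw [min_eq_left h]; linarith
    · rw [min_eq_right h]; linarith
  -- the three residue classes
  set A0 := Finset.univ.filter (fun k : Fin m => ((k : ℕ) + 1) % 3 = 1) with hA0
  set A1 := Finset.univ.filter (fun k : Fin m => (k : ℕ) % 3 = 1) with hA1
  set A2 := Finset.univ.filter (fun k : Fin m => (k : ℕ) % 3 = 2) with hA2
  have hS0 : ∀ k ∈ A0, (k : ℕ) % 3 = 0 := by
    intro k hk; rw [hA0, Finset.mem_filter] at hk; omega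
  -- the predecessor map
  have hpred : ∀ k : Fin m, (k : ℕ) - 1 < m := fun k => lt_of_le_of_lt (Nat.sub_le _ _) k.isLt
  set f : Fin m → Fin m := fun k => ⟨(k : ℕ) - 1, hpred k⟩ with hf
  set g : Fin m → Fin m := fun k => ⟨(k : ℕ) - 2, lt_of_le_of_lt (Nat.sub_le _ _) k.isLt⟩ with hg
  have key : ∀ (A : Finset (Fin m)) (φ : Fin m → Fin m),
      (∀ k ∈ A, (φ k : ℕ) < (k : ℕ) ∨ (φ k : ℕ) = (k : ℕ)) →
      (∀ a ∈ A, ∀ b ∈ A, φ a = φ b → a = b) →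
      (∀ k ∈ A, φ k ∈ A0) →
      ∑ k ∈ A, v (e k) ≤ ∑ k ∈ A0, v (e k) := by
    intro A φ hle hinj hmem
    calc ∑ k ∈ A, v (e k) ≤ ∑ k ∈ A, v (e (φ k)) := by
          apply Finset.sum_le_sum
          intro k hk
          apply hsort
          rcases hle k hk with h | h
          · exact le_of_lt (by exact_mod_cast h)
          · exact le_of_eq (Fin.ext h)
      _ = ∑ k ∈ A.image φ, v (e k) := by
          rw [Finset.sum_image]
          exact hinj
      _ ≤ ∑ k ∈ A0, v (e k) := by
          apply Finset.sum_le_sum_of_subset_of_nonneg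
          · intro x hx
            rcases Finset.mem_image.mp hx with ⟨a, ha, rfl⟩
            exact hmem a ha
          · intro i _ _; exact hv (e i)
  have h1 : ∑ k ∈ A1, v (e k) ≤ ∑ k ∈ A0, v (e k) := by
    apply key A1 f
    · intro k hk; rw [hA1, Finset.mem_filter] at hk
      left; simp only [hf]; omega
    · intro a ha b hb hab
      rw [hA1, Finset.mem_filter] at ha hb
      simp only [hf, Fin.mk.injEq] at hab
      exact Fin.ext (by omega)
    · intro k hk
      rw [hA1, Finset.mem_filter] at hk
      rw [hA0, Finset.mem_filter]
      refine ⟨Finset.mem_univ _, ?_⟩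
      simp only [hf]; omega
  have h2 : ∑ k ∈ A2, v (e k) ≤ ∑ k ∈ A0, v (e k) := by
    apply key A2 g
    · intro k hk; rw [hA2, Finset.mem_filter] at hk
      left; simp only [hg]; omega
    · intro a ha b hb hab
      rw [hA2, Finset.mem_filter] at ha hb
      simp only [hg, Fin.mk.injEq] at hab
      exact Fin.ext (by omega)
    · intro k hk
      rw [hA2, Finset.mem_filter] at hk
      rw [hA0, Finset.mem_filter]
      refine ⟨Finset.mem_univ _, ?_⟩
      simp only [hg]; omega
  -- T splits as the three sums
  have hTsplit : T = (∑ k ∈ A0, v (e k)) + (∑ k ∈ A1, v (e k)) + (∑ k ∈ A2, v (e k)) := by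
    have hbij : T = ∑ k : Fin m, v (e k) :=
      (Fintype.sum_bijective e he (fun k => v (e k)) v (fun _ => rfl)).symm
    rw [hbij]
    rw [← Finset.sum_filter_add_sum_filter_not Finset.univ (fun k : Fin m => ((k : ℕ) + 1) % 3 = 1) (fun k => v (e k))]
    have : Finset.univ.filter (fun k : Fin m => ¬((k : ℕ) + 1) % 3 = 1) = A1 ∪ A2 := by
      ext k
      simp only [Finset.mem_filter, Finset.mem_union, hA1, hA2, Finset.mem_univ, true_and]
      omega
    rw [this, Finset.sum_union]
    · rw [hA0]; ring
    · rw [Finset.disjoint_left]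
      intro a ha hb
      rw [hA1, Finset.mem_filter] at ha
      rw [hA2, Finset.mem_filter] at hb
      omega
  linarith
end

section
/- Let M be a finite set of m items with nonnegative values v : M → ℝ and let μ be the two-agent maximin share of v. Then ∑_{k ≥ 1, 3k−1 ≤ m} v^(3k−1) + ∑_{k ≥ 1, 3k ≤ m} v^(3k) ≥ 2μ / 3. -/
private lemma rr_key (F : ℕ → ℝ) (hmono : ∀ k l : ℕ, k ≤ l → F l ≤ F k) (N : ℕ) :
    2 * ∑ k ∈ Finset.Ico 1 (3*N+1), F k ≤
      3 * ∑ k ∈ Finset.Ico 1 (3*N+1), (if k % 3 ≠ 0 then F k else 0) := by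
  induction N with
  | zero => simp
  | succ n ih =>
    have h1 : 3*(n+1)+1 = (3*n+1) + 1 + 1 + 1 := by ring
    have hb1 : 1 ≤ 3*n+1 := by omega
    have hb2 : 1 ≤ 3*n+1+1 := by omega
    have hb3 : 1 ≤ 3*n+1+1+1 := by omega
    rw [h1, Finset.sum_Ico_succ_top hb3, Finset.sum_Ico_succ_top hb2,
        Finset.sum_Ico_succ_top hb1, Finset.sum_Ico_succ_top hb3,
        Finset.sum_Ico_succ_top hb2, Finset.sum_Ico_succ_top hb1]
    have e1 : (3*n+1) % 3 ≠ 0 := by omega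
    have e2 : (3*n+1+1) % 3 ≠ 0 := by omega
    have e3 : ¬ ((3*n+1+1+1) % 3 ≠ 0) := by omega
    rw [if_pos e1, if_pos e2, if_neg e3]
    have l1 : F (3*n+1+1+1) ≤ F (3*n+1) := hmono _ _ (by omega)
    have l2 : F (3*n+1+1+1) ≤ F (3*n+1+1) := hmono _ _ (by omega)
    linarith

/-- The sum of the item values in sorted positions `3k - 1` and `3k` (1-based, i.e. all
positions not congruent to `1` modulo `3`) is at least two thirds of the two-agent
maximin share. -/
theorem one_two_round_robin_second_agent
    {ι : Type*} [Fintype ι] [DecidableEq ι]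
    (m : ℕ) (hcard : Fintype.card ι = m)
    (v : ι → ℝ) (hv : ∀ j, 0 ≤ v j)
    (e : Fin m → ι) (he : Function.Bijective e)
    (hsort : ∀ k l : Fin m, k ≤ l → v (e l) ≤ v (e k))
    (μ : ℝ) (hμ : μ = mms2 Finset.univ v) :
    2 * μ / 3 ≤ ∑ k ∈ Finset.univ.filter (fun k : Fin m => ((k : ℕ) + 1) % 3 ≠ 1), v (e k) := by
  rcases Nat.eq_zero_or_pos m with hm | hm
  · subst hm
    have hempty : IsEmpty ι := Fintype.card_eq_zero_iff.mp hcard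
    simp [hμ, mms2, Finset.univ_eq_empty]
  · -- m ≥ 1
    set F : ℕ → ℝ := fun k => if h : k < m then v (e ⟨k, h⟩) else 0 with hF
    have hFnn : ∀ k, 0 ≤ F k := by
      intro k; simp only [hF]
      split
      · exact hv _
      · exact le_rfl
    have hFzero : ∀ k, m ≤ k → F k = 0 := by
      intro k hk; simp only [hF]; rw [dif_neg (by omega)]
    have hFmono : ∀ k l : ℕ, k ≤ l → F l ≤ F k := by
      intro k l hkl
      by_cases hl : l < m
      · have hk : k < m := lt_of_le_of_lt hkl hl
        simp only [hF, dif_pos hl, dif_pos hk]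
        exact hsort ⟨k, hk⟩ ⟨l, hl⟩ hkl
      · rw [hFzero l (by omega)]; exact hFnn k
    have key2 := rr_key F hFmono m
    set G : ℕ → ℝ := fun k => if k % 3 ≠ 0 then F k else 0 with hG
    have hGzero : ∀ k, m ≤ k → G k = 0 := by
      intro k hk; simp only [hG]
      rw [hFzero k hk]; split <;> rfl
    -- sums over range (3m+1) restrict
    have hrangeF : ∑ k ∈ Finset.range (3*m+1), F k = ∑ k ∈ Finset.range m, F k := by
      refine (Finset.sum_subset ?_ ?_).symm
      · intro x hx; simp only [Finset.mem_range] at *; omega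
      · intro x _ hx; simp only [Finset.mem_range] at hx; exact hFzero x (by omega)
    have hrangeG : ∑ k ∈ Finset.range (3*m+1), G k = ∑ k ∈ Finset.range m, G k := by
      refine (Finset.sum_subset ?_ ?_).symm
      · intro x hx; simp only [Finset.mem_range] at *; omega
      · intro x _ hx; simp only [Finset.mem_range] at hx; exact hGzero x (by omega)
    -- split off index 0
    have hsplitF : ∑ k ∈ Finset.range (3*m+1), F k = F 0 + ∑ k ∈ Finset.Ico 1 (3*m+1), F k := by
      rw [Finset.range_eq_Ico, Finset.sum_eq_sum_Ico_succ_bot (by omega)]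
    have hsplitG : ∑ k ∈ Finset.range (3*m+1), G k = ∑ k ∈ Finset.Ico 1 (3*m+1), G k := by
      rw [Finset.range_eq_Ico, Finset.sum_eq_sum_Ico_succ_bot (by omega)]
      have : G 0 = 0 := by simp [hG]
      rw [this, zero_add]
    -- the target sum equals ∑_{range m} G
    have hS : ∑ k ∈ Finset.univ.filter (fun k : Fin m => ((k : ℕ) + 1) % 3 ≠ 1), v (e k)
        = ∑ k ∈ Finset.range m, G k := by
      rw [Finset.sum_filter, ← Fin.sum_univ_eq_sum_range G m]
      apply Finset.sum_congr rfl
      intro k _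
      have hiff : ((k : ℕ) + 1) % 3 ≠ 1 ↔ (k : ℕ) % 3 ≠ 0 := by omega
      by_cases hk : ((k : ℕ) + 1) % 3 ≠ 1
      · rw [if_pos hk]
        simp only [hG, if_pos (hiff.mp hk), hF, dif_pos k.isLt]
      · rw [if_neg hk]
        simp only [hG, if_neg (fun h => hk (hiff.mpr h))]
    -- total sum of values
    have htot : ∑ k ∈ Finset.range m, F k = ∑ j, v j := by
      rw [← Fin.sum_univ_eq_sum_range F m]
      rw [← Function.Bijective.sum_comp he v]
      apply Finset.sum_congr rfl
      intro k _
      simp only [hF, dif_pos k.isLt]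
    -- μ is at most the total minus the largest item
    set j0 : ι := e ⟨0, hm⟩ with hj0
    have hF0 : F 0 = v j0 := by simp [hF, hm, hj0]
    have hμle : μ ≤ ∑ k ∈ Finset.Ico 1 (3*m+1), F k := by
      rw [hμ, mms2]
      apply Finset.sup'_le
      intro S hS'
      have hbound : ∑ j ∈ Finset.univ.erase j0, v j = ∑ k ∈ Finset.Ico 1 (3*m+1), F k := by
        rw [Finset.sum_erase_eq_sub (Finset.mem_univ j0), ← htot, ← hrangeF, hsplitF, hF0]
        ring
      rw [← hbound]
      by_cases hj : j0 ∈ S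
      · refine le_trans (min_le_right _ _) (Finset.sum_le_sum_of_subset_of_nonneg ?_ ?_)
        · intro x hx
          simp only [Finset.mem_sdiff, Finset.mem_univ, true_and] at hx
          simp only [Finset.mem_erase, Finset.mem_univ, and_true]
          intro hxe; exact hx (hxe ▸ hj)
        · intro x _ _; exact hv x
      · refine le_trans (min_le_left _ _) (Finset.sum_le_sum_of_subset_of_nonneg ?_ ?_)
        · intro x hx
          simp only [Finset.mem_erase, Finset.mem_univ, and_true]
          exact fun hxe => hj (hxe ▸ hx)
        · intro x _ _; exact hv x
    rw [hS, ← hrangeG, hsplitG]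
    linarith
end

section
/- Let ι be a finite set of m items and let ρ, π : ι → {1, …, m} be two bijections (rankings). Let d be the number of unordered pairs {j, j′} ⊆ ι on which the two rankings disagree, i.e., ρ(j) < ρ(j′) but π(j) > π(j′). For any threshold t ∈ {0, 1, …, m}, define G₁ = {j ∈ ι : ρ(j) ≤ t and π(j) > t} and G₂ = {j ∈ ι : ρ(j) > t and π(j) ≤ t}. Then |G₁| = |G₂| and |G₁| · |G₂| ≤ d; in particular |G₁| ≤ √d. -/
lemma fin_filter_lt_card (m t : ℕ) (ht : t ≤ m) :
    (Finset.univ.filter fun i : Fin m => (i : ℕ) < t).card = t := by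
  have : (Finset.univ.filter fun i : Fin m => (i : ℕ) < t).card = (Finset.range t).card := by
    refine Finset.card_bij (fun i _ => (i : ℕ)) ?_ ?_ ?_
    · intro i hi
      simpa using (Finset.mem_filter.mp hi).2
    · intro a _ b _ h
      exact Fin.val_injective h
    · intro b hb
      refine ⟨⟨b, lt_of_lt_of_le (Finset.mem_range.mp hb) ht⟩, ?_, rfl⟩
      simpa using Finset.mem_range.mp hb
  simpa using this

lemma rank_filter_lt_card {ι : Type*} [Fintype ι] [DecidableEq ι]
    (m : ℕ) (ρ : ι ≃ Fin m) (t : ℕ) (ht : t ≤ m) :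
    (Finset.univ.filter fun j : ι => (ρ j : ℕ) < t).card = t := by
  have : (Finset.univ.filter fun j : ι => (ρ j : ℕ) < t).card
      = (Finset.univ.filter fun i : Fin m => (i : ℕ) < t).card := by
    refine Finset.card_bij (fun j _ => ρ j) ?_ ?_ ?_
    · intro j hj
      simpa using (Finset.mem_filter.mp hj).2
    · intro a _ b _ h
      exact ρ.injective h
    · intro b hb
      exact ⟨ρ.symm b, by simpa using (Finset.mem_filter.mp hb).2, by simp⟩
  rw [this, fin_filter_lt_card m t ht]

lemma split_count {ι : Type*} [Fintype ι] [DecidableEq ι]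
    (m : ℕ) (σ τ : ι ≃ Fin m) (t : ℕ) (ht : t ≤ m) :
    (Finset.univ.filter fun j : ι => (σ j : ℕ) < t ∧ t ≤ (τ j : ℕ)).card +
      (Finset.univ.filter fun j : ι => (σ j : ℕ) < t ∧ (τ j : ℕ) < t).card = t := by
  have h := Finset.card_filter_add_card_filter_not
    (s := Finset.univ.filter fun j : ι => (σ j : ℕ) < t)
    (p := fun j => t ≤ (τ j : ℕ))
  rw [Finset.filter_filter, Finset.filter_filter] at h
  simp only [not_le] at h
  rw [h, rank_filter_lt_card m σ t ht]

/-- Let `ρ, π` be two rankings of `m` items and `d` the Kendall tau distance between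
them (the number of unordered pairs on which they disagree, encoded as ordered pairs
increasing in `ρ`). For any threshold `t`, the sets `G₁` (items ranked within the top `t`
by `ρ` but not by `π`) and `G₂` (vice versa) satisfy `|G₁| = |G₂|`, `|G₁|·|G₂| ≤ d`
and `|G₁| ≤ √d`. -/
theorem kendall_tau_crossing_bound
    {ι : Type*} [Fintype ι] [DecidableEq ι]
    (m : ℕ) (hcard : Fintype.card ι = m)
    (ρ π : ι ≃ Fin m)
    (d : ℕ)
    (hd : d = (Finset.univ.filter
      (fun p : ι × ι => ρ p.1 < ρ p.2 ∧ π p.2 < π p.1)).card)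
    (t : ℕ) (ht : t ≤ m)
    (G₁ G₂ : Finset ι)
    (hG₁ : G₁ = Finset.univ.filter (fun j => (ρ j : ℕ) < t ∧ t ≤ (π j : ℕ)))
    (hG₂ : G₂ = Finset.univ.filter (fun j => t ≤ (ρ j : ℕ) ∧ (π j : ℕ) < t)) :
    G₁.card = G₂.card ∧ G₁.card * G₂.card ≤ d ∧ (G₁.card : ℝ) ≤ Real.sqrt d := by
  have hcardeq : G₁.card = G₂.card := by
    have h1 := split_count m ρ π t ht
    have h2 := split_count m π ρ t ht
    rw [← hG₁] at h1
    have e2 : (Finset.univ.filter fun j : ι => (π j : ℕ) < t ∧ t ≤ (ρ j : ℕ)) = G₂ := by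
      rw [hG₂]; congr 1; ext j; exact and_comm
    have e3 : (Finset.univ.filter fun j : ι => (π j : ℕ) < t ∧ (ρ j : ℕ) < t)
        = (Finset.univ.filter fun j : ι => (ρ j : ℕ) < t ∧ (π j : ℕ) < t) := by
      congr 1; ext j; exact and_comm
    rw [e2, e3] at h2
    omega
  have hmul : G₁.card * G₂.card ≤ d := by
    rw [hd, ← Finset.card_product]
    apply Finset.card_le_card
    intro p hp
    rw [Finset.mem_product] at hp
    obtain ⟨h1, h2⟩ := hp
    rw [hG₁, Finset.mem_filter] at h1
    rw [hG₂, Finset.mem_filter] at h2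
    simp only [Finset.mem_filter, Finset.mem_univ, true_and]
    exact ⟨Fin.lt_def.mpr (lt_of_lt_of_le h1.2.1 h2.2.1),
      Fin.lt_def.mpr (lt_of_lt_of_le h2.2.2 h1.2.2)⟩
  refine ⟨hcardeq, hmul, ?_⟩
  have hsq : ((G₁.card : ℝ)) ^ 2 ≤ (d : ℝ) := by
    rw [sq]
    calc ((G₁.card : ℝ)) * G₁.card = ((G₁.card * G₂.card : ℕ) : ℝ) := by
          rw [hcardeq]; push_cast; ring
    _ ≤ d := by exact_mod_cast hmul
  exact Real.le_sqrt_of_sq_le hsq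
end

section
/- Let ι be a finite set of m items with nonnegative values v : ι → ℝ. Let σ : {1, …, m} → ι be a bijection enumerating the items in non-increasing value order (v(σ(k)) ≥ v(σ(k+1)) for all k), and let π : {1, …, m} → ι be any bijection (the predicted ordering). Let d ≥ 0 be a real number at least the number of unordered pairs of items whose relative order under σ and under π disagree. Let q ≥ ⌊m/2⌋ and let a : {1, …, q} → ι be injective such that for every ℓ the item a(ℓ) is among the top 2ℓ items of the predicted ordering, i.e., π⁻¹(a(ℓ)) ≤ 2ℓ. Let A = {a(1), …, a(q)} and let R = {σ(2k) : 1 ≤ k ≤ ⌊m/2⌋} be the set of items in even positions of the true ordering. Then for every threshold τ ≥ 0: |{j ∈ A : v(j) ≥ τ}| ≥ |{j ∈ R : v(j) ≥ τ}| − √d. -/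
/-!
Let `t` be the number of items of value at least `τ`. They occupy the first `t` true positions,
so `R` contains `⌊t/2⌋` of them, and it suffices to show that at most `√d` of the first `⌊t/2⌋`
picks have value below `τ`. Such a pick `a(ℓ)` has true position at least `t` but predicted
position at most `2ℓ + 1`, so at least `t - 2ℓ - 1` items truly ahead of it are predicted
behind it. For `b` such picks, with distinct `ℓ < ⌊t/2⌋`, this gives at least
`1 + 3 + ⋯ + (2b - 1) = b²` inversions.
-/

open Finset Function

/-- The Kendall tau distance between orderings `σ` and `π` is `#(inversions (π.symm ∘ σ))`. -/
def inversions {m : ℕ} {α : Type*} [LinearOrder α] (f : Fin m → α) :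
    Finset (Fin m × Fin m) :=
  {p | p.1 < p.2 ∧ f p.2 < f p.1}

lemma sub_le_card_filter_Iio_lt {m n : ℕ} {f : Fin m → Fin n} (hf : Injective f) (j : Fin m) :
    (j : ℕ) - f j ≤ #{i ∈ Iio j | f j < f i} := by
  have hsplit := card_filter_add_card_filter_not (s := Iio j) (fun i => f j < f i)
  have hbelow : #{i ∈ Iio j | ¬ f j < f i} ≤ f j := by
    calc #{i ∈ Iio j | ¬ f j < f i} ≤ #(Iio (f j)) := by
          refine card_le_card_of_injOn f (fun i hi => ?_) hf.injOn
          simp only [coe_filter, mem_Iio, not_lt, Set.mem_ofPred_eq] at hi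
          exact mem_Iio.2 (hi.2.lt_of_ne (hf.ne hi.1.ne))
      _ = f j := Fin.card_Iio _
  rw [Fin.card_Iio] at hsplit
  omega

lemma sum_card_filter_Iio_lt_le_card_inversions {m : ℕ} {α : Type*} [LinearOrder α]
    (f : Fin m → α) (S : Finset (Fin m)) :
    ∑ j ∈ S, #{i ∈ Iio j | f j < f i} ≤ #(inversions f) := by
  rw [← card_sigma]
  refine card_le_card_of_injOn (fun x => (x.2, x.1)) (fun x hx => ?_) (fun x _ y _ h => ?_)
  · simp only [coe_sigma, Set.mem_sigma_iff, coe_filter, mem_Iio, Set.mem_ofPred_eq] at hx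
    simp [inversions, hx.2]
  · simp only [Prod.mk.injEq] at h
    exact Sigma.ext h.2 (heq_of_eq h.1)

lemma sum_sub_le_card_inversions {m n : ℕ} {f : Fin m → Fin n} (hf : Injective f)
    (S : Finset (Fin m)) : ∑ j ∈ S, ((j : ℕ) - f j) ≤ #(inversions f) :=
  (sum_le_sum fun j _ => sub_le_card_filter_Iio_lt hf j).trans
    (sum_card_filter_Iio_lt_le_card_inversions f S)

lemma sq_card_le_sum_two_mul_sub_sub_one {N : Finset ℕ} {c : ℕ} (hN : ∀ n ∈ N, n < c) :
    #N ^ 2 ≤ ∑ n ∈ N, (2 * (c - n) - 1) := by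
  induction N using induction_on_min with
  | empty => simp
  | insert a s hmin ih =>
    have hac : a < c := hN a (mem_insert_self a s)
    have hs : #s ≤ c - a - 1 := by
      calc #s ≤ #(Ioo a c) := card_le_card fun x hx =>
            mem_Ioo.2 ⟨hmin x hx, hN x (mem_insert_of_mem hx)⟩
        _ = c - a - 1 := Nat.card_Ioo a c
    have ih := ih fun n hn => hN n (mem_insert_of_mem hn)
    have ha : a ∉ s := fun h => (hmin a h).false
    rw [card_insert_of_notMem ha, sum_insert ha]
    have : 2 * (c - a) - 1 = 2 * (c - a - 1) + 1 := by omega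
    nlinarith

lemma Fin.mem_iff_lt_card_of_isLowerSet {m : ℕ} {s : Finset (Fin m)}
    (hs : IsLowerSet (s : Set (Fin m))) (k : Fin m) : k ∈ s ↔ (k : ℕ) < #s := by
  constructor
  · intro hk
    have := card_le_card fun l hl => hs (mem_Iic.1 hl) hk
    rw [Fin.card_Iic] at this
    omega
  · intro hk
    by_contra hks
    have := card_le_card fun l hl => mem_Iio.2 (lt_of_not_ge fun hkl => hks (hs hkl hl))
    rw [Fin.card_Iio] at this
    omega

lemma Fin.le_apply_iff_lt_card_of_antitone {m : ℕ} {α : Type*} [Preorder α] [DecidableLE α]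
    {f : Fin m → α} (hf : Antitone f) (τ : α) (k : Fin m) :
    τ ≤ f k ↔ (k : ℕ) < #{k | τ ≤ f k} := by
  refine (mem_filter_univ k).symm.trans
    (Fin.mem_iff_lt_card_of_isLowerSet (s := {k | τ ≤ f k}) (fun k l hlk hk => ?_) k)
  simp only [coe_filter, mem_univ, true_and, Set.mem_ofPred_eq] at hk ⊢
  exact hk.trans (hf hlk)

lemma card_filter_val_lt_succ_mod_two {m t : ℕ} (ht : t ≤ m) :
    #{k : Fin m | (k : ℕ) < t ∧ ((k : ℕ) + 1) % 2 = 0} = t / 2 := by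
  rw [← Nat.card_multiples t 2, ← card_map Fin.valEmbedding]
  congr 1
  ext n
  simp only [mem_map, mem_filter, mem_univ, true_and, Fin.valEmbedding_apply, mem_range,
    Nat.dvd_iff_mod_eq_zero]
  exact ⟨fun ⟨k, hk, hkn⟩ => hkn ▸ hk, fun hn => ⟨⟨n, hn.1.trans_le ht⟩, hn, rfl⟩⟩

lemma le_card_filter_image_add_card_filter_lt {ι : Type*} [DecidableEq ι] {q c : ℕ}
    {a : Fin q → ι} (ha : Injective a) (p : ι → Prop) [DecidablePred p] (hc : c ≤ q) :
    c ≤ #{j ∈ univ.image a | p j} + #{ℓ : Fin q | (ℓ : ℕ) < c ∧ ¬ p (a ℓ)} := by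
  rw [filter_image, card_image_of_injective _ ha]
  calc c = #{ℓ : Fin q | (ℓ : ℕ) < c} := by rw [Fin.card_filter_val_lt, min_eq_right hc]
    _ ≤ #{ℓ | p (a ℓ)} + #{ℓ : Fin q | (ℓ : ℕ) < c ∧ ¬ p (a ℓ)} := by
        refine (card_le_card fun ℓ hℓ => ?_).trans (card_union_le _ _)
        simp only [mem_union, mem_filter_univ] at hℓ ⊢
        tauto

lemma sq_card_le_card_inversions_of_late_picks {ι : Type*} {m q : ℕ} (σ π : Fin m ≃ ι)
    {a : Fin q → ι} (ha : Injective a)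
    (haRR : ∀ ℓ : Fin q, (π.symm (a ℓ) : ℕ) < 2 * ((ℓ : ℕ) + 1))
    {t : ℕ} {L : Finset (Fin q)} (hL : ∀ ℓ ∈ L, (ℓ : ℕ) < t / 2 ∧ t ≤ σ.symm (a ℓ)) :
    #L ^ 2 ≤ #(inversions (π.symm ∘ σ)) := by
  have hpos : Injective (σ.symm ∘ a) := σ.symm.injective.comp ha
  calc #L ^ 2 = #(L.map Fin.valEmbedding) ^ 2 := by rw [card_map]
    _ ≤ ∑ n ∈ L.map Fin.valEmbedding, (2 * (t / 2 - n) - 1) :=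
        sq_card_le_sum_two_mul_sub_sub_one (by simpa using fun ℓ hℓ => (hL ℓ hℓ).1)
    _ = ∑ ℓ ∈ L, (2 * (t / 2 - ℓ) - 1) := sum_map _ _ _
    _ ≤ ∑ ℓ ∈ L, ((σ.symm (a ℓ) : ℕ) - π.symm (a ℓ)) := sum_le_sum fun ℓ hℓ => by
        have := haRR ℓ
        have := (hL ℓ hℓ).2
        omega
    _ = ∑ j ∈ L.image (σ.symm ∘ a), ((j : ℕ) - (π.symm ∘ σ) j) := by
        rw [sum_image fun x _ y _ h => hpos h]
        simp
    _ ≤ #(inversions (π.symm ∘ σ)) :=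
        sum_sub_le_card_inversions (π.symm.injective.comp σ.injective) _

theorem round_robin_noisy_threshold_bound_general
    {ι : Type*} [DecidableEq ι]
    (m : ℕ)
    (v : ι → ℝ)
    (σ : Fin m ≃ ι) (hσ : ∀ k l : Fin m, k ≤ l → v (σ l) ≤ v (σ k))
    (π : Fin m ≃ ι)
    (d : ℝ)
    (hd : ((Finset.univ.filter
        (fun p : Fin m × Fin m => p.1 < p.2 ∧ π.symm (σ p.2) < π.symm (σ p.1))).card : ℝ) ≤ d)
    (q : ℕ) (hq : m / 2 ≤ q)
    (a : Fin q → ι) (ha : Function.Injective a)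
    (haRR : ∀ ℓ : Fin q, (π.symm (a ℓ) : ℕ) < 2 * ((ℓ : ℕ) + 1))
    (A R : Finset ι)
    (hA : A = Finset.univ.image a)
    (hR : R = (Finset.univ.filter (fun k : Fin m => ((k : ℕ) + 1) % 2 = 0)).image σ) :
    ∀ τ : ℝ, 0 ≤ τ →
      ((R.filter (fun j => τ ≤ v j)).card : ℝ) - Real.sqrt d ≤
        ((A.filter (fun j => τ ≤ v j)).card : ℝ) := by
  intro τ _
  set t := #{k | τ ≤ v (σ k)}
  have hthr : ∀ k, τ ≤ v (σ k) ↔ (k : ℕ) < t := Fin.le_apply_iff_lt_card_of_antitone hσ τ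
  have htm : t ≤ m := (card_le_univ _).trans_eq (Fintype.card_fin m)
  have hRcount : #{j ∈ R | τ ≤ v j} = t / 2 := by
    rw [hR, filter_image, card_image_of_injective _ σ.injective, filter_filter,
      ← card_filter_val_lt_succ_mod_two htm]
    simp only [hthr, and_comm]
  set L : Finset (Fin q) := {ℓ | (ℓ : ℕ) < t / 2 ∧ ¬ τ ≤ v (a ℓ)}
  have hAcount : t / 2 ≤ #{j ∈ A | τ ≤ v j} + #L :=
    hA ▸ le_card_filter_image_add_card_filter_lt ha _ ((Nat.div_le_div_right htm).trans hq)
  have hL : #L ^ 2 ≤ #(inversions (π.symm ∘ σ)) :=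
    sq_card_le_card_inversions_of_late_picks σ π ha haRR fun ℓ hℓ => by
      have hlate := hthr (σ.symm (a ℓ))
      rw [σ.apply_symm_apply] at hlate
      simpa only [L, mem_filter_univ, hlate, not_lt] using hℓ
  have hL_le_sqrt : (#L : ℝ) ≤ √d :=
    Real.le_sqrt_of_sq_le (le_trans (by exact_mod_cast hL) hd)
  rw [hRcount]
  have : ((t / 2 : ℕ) : ℝ) ≤ #{j ∈ A | τ ≤ v j} + #L := by exact_mod_cast hAcount
  linarith

/-- If the Kendall tau distance between the true ordering `σ` (non-increasing in value)
and the predicted ordering `π` is at most `d`, and `a(1), …, a(q)` are distinct items such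
that `a(ℓ)` is among the top `2ℓ` items of the predicted ordering, then for every
threshold `τ ≥ 0` the threshold count of `A = {a(1), …, a(q)}` is within an additive
`√d` of the threshold count of the even-position bundle `R = {σ(2k) : 1 ≤ k ≤ ⌊m/2⌋}`. -/
theorem round_robin_noisy_threshold_bound
    {ι : Type*} [Fintype ι] [DecidableEq ι]
    (m : ℕ) (hcard : Fintype.card ι = m)
    (v : ι → ℝ) (hv : ∀ j, 0 ≤ v j)
    (σ : Fin m ≃ ι) (hσ : ∀ k l : Fin m, k ≤ l → v (σ l) ≤ v (σ k))
    (π : Fin m ≃ ι)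
    (d : ℝ) (hd0 : 0 ≤ d)
    (hd : ((Finset.univ.filter
        (fun p : Fin m × Fin m => p.1 < p.2 ∧ π.symm (σ p.2) < π.symm (σ p.1))).card : ℝ) ≤ d)
    (q : ℕ) (hq : m / 2 ≤ q)
    (a : Fin q → ι) (ha : Function.Injective a)
    (haRR : ∀ ℓ : Fin q, (π.symm (a ℓ) : ℕ) < 2 * ((ℓ : ℕ) + 1))
    (A R : Finset ι)
    (hA : A = Finset.univ.image a)
    (hR : R = (Finset.univ.filter (fun k : Fin m => ((k : ℕ) + 1) % 2 = 0)).image σ) :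
    ∀ τ : ℝ, 0 ≤ τ →
      ((R.filter (fun j => τ ≤ v j)).card : ℝ) - Real.sqrt d ≤
        ((A.filter (fun j => τ ≤ v j)).card : ℝ) :=
  round_robin_noisy_threshold_bound_general m v σ hσ π d hd q hq a ha haRR A R hA hR
end

section
/- Let k₁ and k₂ be positive integers with k₂ < k₁, and let f : {1, …, k₁} → ℝ be nonnegative. Then there exist integers α, β, α′, β′ in {1, …, k₁} such that the set I = ([α, β] ∪ [α′, β′]) ∩ {1, …, k₁} (a union of two integer intervals) has exactly k₂ elements and its average f-value is at most the overall average: k₁ · ∑_{i ∈ I} f(i) ≤ k₂ · ∑_{i=1}^{k₁} f(i). -/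
open Finset

/-- A below-average subset of prescribed size `k₂` of `{1, …, k₁}` can be chosen as a
union of two integer intervals: there exist `α, β, α', β'` in `{1, …, k₁}` such that
`I = ([α,β] ∪ [α',β']) ∩ {1,…,k₁}` has exactly `k₂` elements and
`k₁ · ∑_{i ∈ I} f(i) ≤ k₂ · ∑_{i=1}^{k₁} f(i)`. -/
theorem two_intervals_below_average
    (k₁ k₂ : ℕ) (hk₂ : 0 < k₂) (hlt : k₂ < k₁)
    (f : ℕ → ℝ) (hf : ∀ i ∈ Finset.Icc 1 k₁, 0 ≤ f i) :
    ∃ α β α' β' : ℕ, α ∈ Finset.Icc 1 k₁ ∧ β ∈ Finset.Icc 1 k₁ ∧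
      α' ∈ Finset.Icc 1 k₁ ∧ β' ∈ Finset.Icc 1 k₁ ∧
      ((Finset.Icc α β ∪ Finset.Icc α' β') ∩ Finset.Icc 1 k₁).card = k₂ ∧
      (k₁ : ℝ) * ∑ i ∈ (Finset.Icc α β ∪ Finset.Icc α' β') ∩ Finset.Icc 1 k₁, f i ≤
        (k₂ : ℝ) * ∑ i ∈ Finset.Icc 1 k₁, f i := by
  classical
  set T : Finset ℕ := Finset.Icc 1 k₁ with hT
  set W : ℕ → Finset ℕ :=
    fun s => (Icc s (s + k₂ - 1) ∪ Icc 1 (s + k₂ - 1 - k₁)) ∩ T with hW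
  have hWsub : ∀ s, W s ⊆ T := fun s => inter_subset_right
  -- each window has k₂ elements
  have hcard : ∀ s ∈ T, (W s).card = k₂ := by
    intro s hs
    simp only [hT, mem_Icc] at hs
    have heq : W s = Icc s (min (s + k₂ - 1) k₁) ∪ Icc 1 (s + k₂ - 1 - k₁) := by
      ext i
      simp only [hW, hT, mem_inter, mem_union, mem_Icc]
      omega
    rw [heq, card_union_of_disjoint, Nat.card_Icc, Nat.card_Icc]
    · omega
    · rw [disjoint_left]
      intro a ha hb
      simp only [mem_Icc] at ha hb
      omega
  -- each point of T lies in exactly k₂ windows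
  have hcount : ∀ i ∈ T, (T.filter fun s => i ∈ W s).card = k₂ := by
    intro i hi
    simp only [hT, mem_Icc] at hi
    have heq : (T.filter fun s => i ∈ W s)
        = Icc (max 1 (i + 1 - k₂)) i ∪ Icc (i + k₁ + 1 - k₂) k₁ := by
      ext s
      simp only [hW, hT, mem_filter, mem_inter, mem_union, mem_Icc]
      omega
    rw [heq, card_union_of_disjoint, Nat.card_Icc, Nat.card_Icc]
    · omega
    · rw [disjoint_left]
      intro a ha hb
      simp only [mem_Icc] at ha hb
      omega
  -- total sum over all windows
  have hsum : ∑ s ∈ T, ∑ i ∈ W s, f i = (k₂ : ℝ) * ∑ i ∈ T, f i := by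
    have h1 : ∀ s ∈ T, ∑ i ∈ W s, f i = ∑ i ∈ T, if i ∈ W s then f i else 0 := by
      intro s _
      rw [Finset.sum_ite_mem]
      congr 1
      exact (inter_eq_right.mpr (hWsub s)).symm
    rw [Finset.sum_congr rfl h1, Finset.sum_comm]
    have h2 : ∀ i ∈ T, (∑ s ∈ T, if i ∈ W s then f i else 0) = (k₂ : ℝ) * f i := by
      intro i hi
      rw [← Finset.sum_filter, Finset.sum_const, hcount i hi, nsmul_eq_mul]
    rw [Finset.sum_congr rfl h2, ← Finset.mul_sum]
  -- pick the minimizing window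
  have hne : T.Nonempty := by
    rw [hT]
    exact ⟨1, by simp; omega⟩
  obtain ⟨s₀, hs₀T, hmin⟩ := Finset.exists_min_image T (fun s => ∑ i ∈ W s, f i) hne
  have hcardT : T.card = k₁ := by rw [hT, Nat.card_Icc]; omega
  have hkey : (k₁ : ℝ) * ∑ i ∈ W s₀, f i ≤ (k₂ : ℝ) * ∑ i ∈ T, f i := by
    calc (k₁ : ℝ) * ∑ i ∈ W s₀, f i = ∑ _s ∈ T, ∑ i ∈ W s₀, f i := by
          rw [Finset.sum_const, hcardT, nsmul_eq_mul]
      _ ≤ ∑ s ∈ T, ∑ i ∈ W s, f i := Finset.sum_le_sum hmin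
      _ = (k₂ : ℝ) * ∑ i ∈ T, f i := hsum
  have hs₀ : 1 ≤ s₀ ∧ s₀ ≤ k₁ := by simpa [hT, mem_Icc] using hs₀T
  by_cases hwrap : s₀ + k₂ - 1 ≤ k₁
  · refine ⟨s₀, s₀ + k₂ - 1, s₀, s₀, ?_, ?_, ?_, ?_, ?_, ?_⟩
    · simp only [hT, mem_Icc]; omega
    · simp only [hT, mem_Icc]; omega
    · simp only [hT, mem_Icc]; omega
    · simp only [hT, mem_Icc]; omega
    all_goals {
      have heq : (Finset.Icc s₀ (s₀ + k₂ - 1) ∪ Finset.Icc s₀ s₀) ∩ T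
          = W s₀ := by
        ext i
        simp only [hW, hT, mem_inter, mem_union, mem_Icc]
        omega
      rw [heq]
      first
        | exact hcard s₀ hs₀T
        | exact hkey
    }
  · refine ⟨s₀, k₁, 1, s₀ + k₂ - 1 - k₁, ?_, ?_, ?_, ?_, ?_, ?_⟩
    · simp only [hT, mem_Icc]; omega
    · simp only [hT, mem_Icc]; omega
    · simp only [hT, mem_Icc]; omega
    · simp only [hT, mem_Icc]; omega
    all_goals {
      have heq : (Finset.Icc s₀ k₁ ∪ Finset.Icc 1 (s₀ + k₂ - 1 - k₁)) ∩ T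
          = W s₀ := by
        ext i
        simp only [hW, hT, mem_inter, mem_union, mem_Icc]
        omega
      rw [heq]
      first
        | exact hcard s₀ hs₀T
        | exact hkey
    }
end

section
/- Let M be a finite set of items with nonnegative values v : M → ℝ, let μ be the two-agent maximin share of v, and let ε > 0. Then the number of items whose value strictly exceeds εμ/4 is at most ⌈8/ε⌉, i.e., |{j ∈ M : v(j) > εμ/4}| ≤ ⌈8/ε⌉. -/
open Finset

section

variable {ι : Type*}

lemma card_mul_lt_sum {S : Finset ι} {v : ι → ℝ} {t : ℝ} (hS : S.Nonempty)
    (ht : ∀ j ∈ S, t < v j) : #S * t < ∑ j ∈ S, v j := by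
  simpa using sum_lt_sum_of_nonempty hS ht

variable [DecidableEq ι] {M : Finset ι} {v : ι → ℝ}

lemma min_sum_le_mms2 {S : Finset ι} (hS : S ⊆ M) :
    min (∑ j ∈ S, v j) (∑ j ∈ M \ S, v j) ≤ mms2 M v :=
  le_sup' (fun S => min (∑ j ∈ S, v j) (∑ j ∈ M \ S, v j)) (mem_powerset.mpr hS)

lemma mms2_nonneg (hv : ∀ j, 0 ≤ v j) : 0 ≤ mms2 M v := by
  have h := min_sum_le_mms2 (v := v) (empty_subset M)
  rwa [sum_empty, sdiff_empty, min_eq_left (sum_nonneg fun j _ => hv j)] at h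

lemma half_card_mul_lt_mms2 (hv : ∀ j, 0 ≤ v j) {L : Finset ι} (hLM : L ⊆ M) (hL : 2 ≤ #L)
    {t : ℝ} (ht : ∀ j ∈ L, t < v j) : (#L / 2 : ℕ) * t < mms2 M v := by
  obtain ⟨S, hSL, hS⟩ := exists_subset_card_eq (Nat.div_le_self #L 2)
  have hLS : #L / 2 ≤ #(L \ S) := by rw [card_sdiff_of_subset hSL, hS]; omega
  obtain ⟨T, hTLS, hT⟩ := exists_subset_card_eq hLS
  have hk : 0 < #L / 2 := by omega
  have hS_lt : (#L / 2 : ℕ) * t < ∑ j ∈ S, v j := hS ▸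
    card_mul_lt_sum (card_pos.mp (hS ▸ hk)) fun j hj => ht j (hSL hj)
  have hT_lt : (#L / 2 : ℕ) * t < ∑ j ∈ T, v j := hT ▸
    card_mul_lt_sum (card_pos.mp (hT ▸ hk)) fun j hj => ht j (sdiff_subset (hTLS hj))
  have hTM : T ⊆ M \ S := hTLS.trans (sdiff_subset_sdiff hLM le_rfl)
  have hT_le : ∑ j ∈ T, v j ≤ ∑ j ∈ M \ S, v j :=
    sum_le_sum_of_subset_of_nonneg hTM fun j _ _ => hv j
  calc (#L / 2 : ℕ) * t < min (∑ j ∈ S, v j) (∑ j ∈ M \ S, v j) :=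
        lt_min hS_lt (hT_lt.trans_le hT_le)
    _ ≤ mms2 M v := min_sum_le_mms2 (hSL.trans hLM)

end

/-- The number of items whose value strictly exceeds `εμ/4` is at most `⌈8/ε⌉`,
where `μ` is the two-agent maximin share. -/
theorem few_large_items
    {ι : Type*} [DecidableEq ι]
    (M : Finset ι) (v : ι → ℝ) (hv : ∀ j, 0 ≤ v j)
    (μ : ℝ) (hμ : μ = mms2 M v)
    (ε : ℝ) (hε : 0 < ε) :
    (M.filter (fun j => ε * μ / 4 < v j)).card ≤ ⌈(8 : ℝ) / ε⌉₊ := by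
  set L := M.filter (fun j => ε * μ / 4 < v j)
  set n := ⌈(8 : ℝ) / ε⌉₊
  by_contra! hnL
  have hn : 1 ≤ n := Nat.one_le_ceil_iff.mpr (by positivity)
  have hμ_lt := half_card_mul_lt_mms2 hv (L := L) (filter_subset _ M) (by omega)
    fun j hj => (mem_filter.mp hj).2
  rw [← hμ] at hμ_lt
  have hhalf : (4 : ℝ) / ε ≤ (#L / 2 : ℕ) := by
    have h8 : (8 : ℝ) / ε ≤ n := Nat.le_ceil _
    have h2 : (n : ℝ) ≤ 2 * (#L / 2 : ℕ) := by exact_mod_cast (by omega : n ≤ 2 * (#L / 2))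
    linarith [show (8 : ℝ) / ε = 2 * (4 / ε) by ring]
  have hμ0 : 0 ≤ μ := hμ ▸ mms2_nonneg hv
  have hμ_le : μ ≤ (#L / 2 : ℕ) * (ε * μ / 4) := calc
    μ = 4 / ε * (ε * μ / 4) := by field_simp
    _ ≤ (#L / 2 : ℕ) * (ε * μ / 4) := by gcongr
  linarith
end

section
/- Let M = {1, …, m} be items with nonnegative values v : M → ℝ, let μ be the two-agent maximin share of v, and let ε > 0. Let L = {j ∈ M : v(j) > εμ/4} be the set of large items and S = M \ L the set of small items. Then there exist a partition L = L₁ ⊔ L₂ and a threshold t ∈ {0, 1, …, m} such that the bundles S₁ = L₁ ∪ {j ∈ S : j ≤ t} and S₂ = L₂ ∪ {j ∈ S : j > t} satisfy min(v(S₁), v(S₂)) ≥ (1 − ε/8) · μ. -/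
/-- For items `M = {1, …, m}` with large items `L = {j : v(j) > εμ/4}` and small items
`S = M \ L`, there is a partition `L = L₁ ⊔ L₂` of the large items and a threshold
`t ∈ {0, …, m}` splitting the small items by index, such that the two resulting bundles
each have value at least `(1 - ε/8)·μ`. -/
theorem succinct_near_optimal_partition
    (m : ℕ) (v : ℕ → ℝ) (hv : ∀ j, 0 ≤ v j)
    (ε : ℝ) (hε : 0 < ε)
    (μ : ℝ) (hμ : μ = mms2 (Finset.Icc 1 m) v)
    (L S : Finset ℕ)
    (hL : L = (Finset.Icc 1 m).filter (fun j => ε * μ / 4 < v j))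
    (hS : S = Finset.Icc 1 m \ L) :
    ∃ L₁ L₂ : Finset ℕ, Disjoint L₁ L₂ ∧ L₁ ∪ L₂ = L ∧
      ∃ t ≤ m, (1 - ε / 8) * μ ≤
        min (∑ j ∈ L₁ ∪ S.filter (fun j => j ≤ t), v j)
            (∑ j ∈ L₂ ∪ S.filter (fun j => t < j), v j) := by
  classical
  set Mset := Finset.Icc 1 m with hMdef
  obtain ⟨A, hA, hAeq⟩ := Finset.exists_mem_eq_sup'
    (⟨∅, Finset.empty_mem_powerset Mset⟩ : Mset.powerset.Nonempty)
    (fun B => min (∑ j ∈ B, v j) (∑ j ∈ Mset \ B, v j))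
  rw [Finset.mem_powerset] at hA
  have hμA : μ = min (∑ j ∈ A, v j) (∑ j ∈ Mset \ A, v j) := by
    rw [hμ, mms2, hAeq]
  set T : ℝ := ∑ j ∈ Mset, v j with hTdef
  have hT0 : (0:ℝ) ≤ T := Finset.sum_nonneg fun j _ => hv j
  have hμ0 : 0 ≤ μ := by
    rw [hμ, mms2]
    refine le_trans ?_ (Finset.le_sup'
      (fun B => min (∑ j ∈ B, v j) (∑ j ∈ Mset \ B, v j))
      (Finset.empty_mem_powerset Mset))
    simp only [Finset.sum_empty, Finset.sdiff_empty]
    exact le_min le_rfl hT0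
  have hA1 : μ ≤ ∑ j ∈ A, v j := hμA ▸ min_le_left _ _
  have hA2 : μ ≤ ∑ j ∈ Mset \ A, v j := hμA ▸ min_le_right _ _
  have hTA : ∑ j ∈ Mset \ A, v j + ∑ j ∈ A, v j = T := Finset.sum_sdiff hA
  have hT2μ : 2 * μ ≤ T := by linarith
  have hεμ4 : 0 ≤ ε * μ / 4 := by positivity
  have hsmall : ∀ j ∈ S, v j ≤ ε * μ / 4 := by
    intro j hj
    rw [hS, Finset.mem_sdiff, hL, Finset.mem_filter] at hj
    push_neg at hj
    exact hj.2 hj.1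
  have hSM : S ⊆ Mset := by rw [hS]; exact Finset.sdiff_subset
  have hLM : L ⊆ Mset := by rw [hL]; exact Finset.filter_subset _ _
  set L₁ : Finset ℕ := L ∩ A with hL₁
  set L₂ : Finset ℕ := L \ A with hL₂
  have hdL : Disjoint L₁ L₂ := by
    rw [hL₁, hL₂, Finset.disjoint_left]
    intro a ha hb
    rw [Finset.mem_inter] at ha
    rw [Finset.mem_sdiff] at hb
    exact hb.2 ha.2
  have hLU : L₁ ∪ L₂ = L := by
    rw [hL₁, hL₂, Finset.union_comm, Finset.sdiff_union_inter]
  refine ⟨L₁, L₂, hdL, hLU, ?_⟩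
  set c : ℝ := (1 - ε / 8) * μ with hc
  have hcμ : c ≤ μ := by nlinarith
  set f : ℕ → ℝ := fun t => ∑ j ∈ L₁ ∪ S.filter (fun j => j ≤ t), v j with hf
  have hdLS : ∀ (X Y : Finset ℕ), X ⊆ L → Y ⊆ S → Disjoint X Y := by
    intro X Y hX hY
    refine Finset.disjoint_of_subset_left hX (Finset.disjoint_of_subset_right hY ?_)
    rw [hS]; exact Finset.disjoint_sdiff
  have hfeq : ∀ t, f t = ∑ j ∈ L₁, v j + ∑ j ∈ S.filter (fun j => j ≤ t), v j := by
    intro t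
    exact Finset.sum_union
      (hdLS _ _ Finset.inter_subset_left (Finset.filter_subset _ _))
  -- complement identity
  have hcomp : ∀ t, f t + ∑ j ∈ L₂ ∪ S.filter (fun j => t < j), v j = T := by
    intro t
    have h2 : ∑ j ∈ L₂ ∪ S.filter (fun j => t < j), v j
        = ∑ j ∈ L₂, v j + ∑ j ∈ S.filter (fun j => t < j), v j :=
      Finset.sum_union (hdLS _ _ Finset.sdiff_subset (Finset.filter_subset _ _))
    have h3 : ∑ j ∈ L₁, v j + ∑ j ∈ L₂, v j = ∑ j ∈ L, v j := by
      rw [← Finset.sum_union hdL, hLU]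
    have h4 : ∑ j ∈ S.filter (fun j => j ≤ t), v j
        + ∑ j ∈ S.filter (fun j => t < j), v j = ∑ j ∈ S, v j := by
      rw [← Finset.sum_union]
      · congr 1
        rw [← Finset.filter_or]
        apply Finset.filter_true_of_mem
        intro j _
        exact le_or_gt j t
      · rw [Finset.disjoint_left]
        intro a ha hb
        rw [Finset.mem_filter] at ha hb
        omega
    have h5 : ∑ j ∈ L, v j + ∑ j ∈ S, v j = T := by
      rw [← Finset.sum_union (hdLS _ _ (subset_refl L) (subset_refl S))]
      congr 1
      rw [hS, Finset.union_sdiff_of_subset hLM]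
    rw [hfeq, h2]
    linarith
  -- step bound
  have hstep : ∀ t, f (t + 1) ≤ f t + ε * μ / 4 := by
    intro t
    have hsplit : S.filter (fun j => j ≤ t + 1)
        = S.filter (fun j => j ≤ t) ∪ S.filter (fun j => j = t + 1) := by
      ext j
      simp only [Finset.mem_filter, Finset.mem_union]
      have : j ≤ t + 1 ↔ j ≤ t ∨ j = t + 1 := by omega
      tauto
    have hd : Disjoint (S.filter (fun j => j ≤ t)) (S.filter (fun j => j = t + 1)) := by
      rw [Finset.disjoint_left]
      intro a ha hb
      rw [Finset.mem_filter] at ha hb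
      omega
    have hsum1 : ∑ j ∈ S.filter (fun j => j = t + 1), v j ≤ ε * μ / 4 := by
      rw [Finset.filter_eq']
      split_ifs with h
      · simpa using hsmall _ h
      · simpa using hεμ4
    rw [hfeq, hfeq, hsplit, Finset.sum_union hd]
    linarith
  -- boundary values
  have hf0 : f 0 ≤ T - c := by
    have h1 : S.filter (fun j => j ≤ 0) = ∅ := by
      apply Finset.filter_false_of_mem
      intro j hj
      have := hSM hj
      rw [hMdef, Finset.mem_Icc] at this
      omega
    have h3 : ∑ j ∈ L₁, v j ≤ ∑ j ∈ A, v j :=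
      Finset.sum_le_sum_of_subset_of_nonneg
        (by rw [hL₁]; exact Finset.inter_subset_right) (fun j _ _ => hv j)
    rw [hfeq, h1]
    simp only [Finset.sum_empty, add_zero]
    linarith
  have hfm : c ≤ f m := by
    have h1 : S.filter (fun j => m < j) = ∅ := by
      apply Finset.filter_false_of_mem
      intro j hj
      have := hSM hj
      rw [hMdef, Finset.mem_Icc] at this
      omega
    have h2 : ∑ j ∈ L₂, v j ≤ ∑ j ∈ Mset \ A, v j := by
      apply Finset.sum_le_sum_of_subset_of_nonneg _ (fun j _ _ => hv j)
      rw [hL₂]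
      exact Finset.sdiff_subset_sdiff hLM (subset_refl A)
    have h3 := hcomp m
    rw [h1, Finset.union_empty] at h3
    linarith
  -- choose threshold
  set P : ℕ → Prop := fun t => f t ≤ T - c with hP
  set t : ℕ := Nat.findGreatest P m with ht
  have htm : t ≤ m := Nat.findGreatest_le m
  have hPt : P t := Nat.findGreatest_spec (Nat.zero_le m) hf0
  have hctf : c ≤ f t := by
    rcases eq_or_lt_of_le htm with h | h
    · rw [h]; exact hfm
    · have hnP : ¬ P (t + 1) := by
        apply Nat.findGreatest_is_greatest
        · rw [← ht]; omega
        · omega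
      rw [hP] at hnP
      push_neg at hnP
      have := hstep t
      rw [hc] at *
      nlinarith
  refine ⟨t, htm, le_min hctf ?_⟩
  have := hcomp t
  rw [hP] at hPt
  linarith
end
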